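/- Let ψ be a rank-one projector with the property that there exists a free generalized twirling channel T(ρ) = tr(ψρ)ψ + tr((I−ψ)ρ)σ* with σ* free and tr(ψσ*) = 0. Suppose f = max over free channels Λ of tr[ψΛ(ρ)] > 0 and ε ∈ [0,1) with 2(1−ε)/f − 1 ≥ 1. Then there exist free channels Λ₊, Λ₋ (obtained by composing an optimal Λ with T and the replacement channel to σ*) and λ₊ − λ₋ = 1 with λ₊ + λ₋ = 2(1−ε)/f − 1 such that ½‖λ₊Λ₊(ρ) − λ₋Λ₋(ρ) − ψ‖₁ ≤ ε. -/

import Mathlib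

/-!
Take `Λ₊ = T ∘ Λ` and `Λ₋` the replacement channel. A channel preserves Hermiticity, so
`tr(ψ Λρ)` is the real number `f`, and the twirl sends `Λρ` to `f ψ + (1 - f) σ*`. With
`λ₊ = (1 - ε) / f` and `λ₋ = λ₊ - 1` the error operator collapses to `ε (σ* - ψ)`. Finally
`tr(ψ σ*) = 0` forces `σ* ψ = 0`, so `|σ* - ψ| = σ* + ψ` and the trace norm is exactly `2ε`.
-/

open Matrix BigOperators ComplexOrder

noncomputable section

/-- Square root of a positive semidefinite matrix (removed from Mathlib; old definition). -/
noncomputable def Matrix.PosSemidef.sqrt {n 𝕜 : Type*} [Fintype n] [DecidableEq n] [RCLike 𝕜]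
    {A : Matrix n n 𝕜} (hA : A.PosSemidef) : Matrix n n 𝕜 :=
  hA.1.eigenvectorUnitary.1 * diagonal ((↑) ∘ (√·) ∘ hA.1.eigenvalues) *
    (star hA.1.eigenvectorUnitary : Matrix n n 𝕜)

/-- Trace norm: tr √(AᴴA). -/
noncomputable def traceNorm {n : Type*} [Fintype n] [DecidableEq n] (A : Matrix n n ℂ) : ℝ :=
  ((Matrix.posSemidef_conjTranspose_mul_self A).sqrt.trace).re

/-- Density operator: positive semidefinite with unit trace. -/
def IsDensity {n : Type*} [Fintype n] [DecidableEq n] (ρ : Matrix n n ℂ) : Prop :=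
  ρ.PosSemidef ∧ ρ.trace = 1

/-- Choi matrix of a linear map on matrices. -/
noncomputable def choi {n m : Type*} [Fintype n] [DecidableEq n] [Fintype m] [DecidableEq m]
    (Φ : Matrix n n ℂ →ₗ[ℂ] Matrix m m ℂ) : Matrix (n × m) (n × m) ℂ :=
  ∑ i : n, ∑ j : n,
    Matrix.kroneckerMap (· * ·) (Matrix.single i j (1 : ℂ)) (Φ (Matrix.single i j (1 : ℂ)))

/-- Quantum channel: completely positive (PSD Choi matrix) and trace preserving. -/
def IsCPTP {n m : Type*} [Fintype n] [DecidableEq n] [Fintype m] [DecidableEq m]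
    (Φ : Matrix n n ℂ →ₗ[ℂ] Matrix m m ℂ) : Prop :=
  (choi Φ).PosSemidef ∧ ∀ A, (Φ A).trace = A.trace

section Sqrt
open scoped MatrixOrder

variable {n : Type*} [Fintype n] [DecidableEq n]

lemma Matrix.PosSemidef.sqrt_eq_cfcSqrt {A : Matrix n n ℂ} (hA : A.PosSemidef) :
    hA.sqrt = CFC.sqrt A := by
  rw [CFC.sqrt_eq_real_sqrt A hA.nonneg, cfcₙ_eq_cfc, hA.1.cfc_eq, IsHermitian.cfc,
    Unitary.conjStarAlgAut_apply, Matrix.PosSemidef.sqrt]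

lemma Matrix.PosSemidef.sqrt_eq_of_sq_eq {A S : Matrix n n ℂ} (hA : A.PosSemidef)
    (hS : S.PosSemidef) (h : S ^ 2 = A) : hA.sqrt = S := by
  rw [hA.sqrt_eq_cfcSqrt]
  exact CFC.sqrt_unique (by rw [← h, sq]) hS.nonneg

end Sqrt

theorem traceNorm_sub_of_mul_eq_zero {n : Type*} [Fintype n] [DecidableEq n]
    {A B : Matrix n n ℂ} (hA : A.PosSemidef) (hB : B.PosSemidef) (hAB : A * B = 0) :
    traceNorm (A - B) = (A.trace + B.trace).re := by
  have hBA : B * A = 0 := by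
    simpa [hA.1.eq, hB.1.eq] using congrArg conjTranspose hAB
  have hsq : (A + B) ^ 2 = (A - B)ᴴ * (A - B) := by
    rw [conjTranspose_sub, hA.1.eq, hB.1.eq, sq]
    simp only [add_mul, mul_add, sub_mul, mul_sub, hAB, hBA]
    abel
  rw [traceNorm, (posSemidef_conjTranspose_mul_self (A - B)).sqrt_eq_of_sq_eq (hA.add hB) hsq,
    trace_add]

section Choi

variable {n m : Type*} [Fintype n] [DecidableEq n] [Fintype m] [DecidableEq m]

lemma choi_apply (Φ : Matrix n n ℂ →ₗ[ℂ] Matrix m m ℂ) (i j : n) (k l : m) :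
    choi Φ (i, k) (j, l) = Φ (single i j 1) k l := by
  simp [choi, Matrix.sum_apply, single_apply, ite_and]

lemma conjTranspose_map_of_isHermitian_choi {Φ : Matrix n n ℂ →ₗ[ℂ] Matrix m m ℂ}
    (hΦ : (choi Φ).IsHermitian) (A : Matrix n n ℂ) : (Φ A)ᴴ = Φ Aᴴ := by
  induction A using Matrix.induction_on' with
  | h_zero => simp
  | h_add p q hp hq => rw [map_add, conjTranspose_add, hp, hq, conjTranspose_add, map_add]
  | h_std_basis i j c =>
    have hunit : (Φ (single i j 1))ᴴ = Φ (single j i 1) := by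
      ext k l
      simpa [choi_apply] using congrFun (congrFun hΦ (j, k)) (i, l)
    rw [show single i j c = c • single i j 1 by rw [smul_single, smul_eq_mul, mul_one],
      map_smul, conjTranspose_smul, hunit, conjTranspose_smul, conjTranspose_single, star_one,
      map_smul]

lemma IsCPTP.isHermitian_map {Φ : Matrix n n ℂ →ₗ[ℂ] Matrix m m ℂ} (hΦ : IsCPTP Φ)
    {A : Matrix n n ℂ} (hA : A.IsHermitian) : (Φ A).IsHermitian := by
  rw [IsHermitian, conjTranspose_map_of_isHermitian_choi hΦ.1.isHermitian, hA.eq]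

end Choi

lemma Matrix.trace_vecMulVec_mul {n R : Type*} [Fintype n] [CommSemiring R] (v w : n → R)
    (X : Matrix n n R) : (vecMulVec v w * X).trace = w ⬝ᵥ X *ᵥ v := by
  rw [vecMulVec_mul, trace_vecMulVec, dotProduct_comm, dotProduct_mulVec]

lemma Matrix.IsHermitian.trace_vecMulVec_star_mul_eq_re {n : Type*} [Fintype n]
    {X : Matrix n n ℂ} (hX : X.IsHermitian) (v : n → ℂ) :
    (vecMulVec v (star v) * X).trace = ((vecMulVec v (star v) * X).trace.re : ℂ) := by
  rw [trace_vecMulVec_mul]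
  exact Complex.ext rfl (hX.im_star_dotProduct_mulVec_self v)

lemma Matrix.PosSemidef.mul_vecMulVec_star_eq_zero {n 𝕜 : Type*} [Fintype n] [RCLike 𝕜]
    {σ : Matrix n n 𝕜} (hσ : σ.PosSemidef) {v : n → 𝕜}
    (h : (vecMulVec v (star v) * σ).trace = 0) : σ * vecMulVec v (star v) = 0 := by
  rw [trace_vecMulVec_mul, hσ.dotProduct_mulVec_zero_iff] at h
  rw [mul_vecMulVec, h, zero_vecMulVec]

lemma smul_add_smul_sub_smul_sub_eq {R M : Type*} [CommRing R] [AddCommGroup M] [Module R M]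
    {l f e : R} (h : l * f = 1 - e) (ψ σ : M) :
    l • (f • ψ + (1 - f) • σ) - (l - 1) • σ - ψ = e • σ - e • ψ := by
  match_scalars
  · linear_combination h
  · linear_combination -h

theorem virtual_distillation_achievability_general
    {n : Type*} [Fintype n] [DecidableEq n]
    (𝒪 : Set (Matrix n n ℂ →ₗ[ℂ] Matrix n n ℂ))
    (hcptp : ∀ Λ ∈ 𝒪, IsCPTP Λ)
    (hcomp : ∀ Λ₁ ∈ 𝒪, ∀ Λ₂ ∈ 𝒪, Λ₁ ∘ₗ Λ₂ ∈ 𝒪)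
    (v : n → ℂ) (hv : star v ⬝ᵥ v = 1)
    (ψ : Matrix n n ℂ) (hψ : ψ = Matrix.vecMulVec v (star v))
    (σs : Matrix n n ℂ) (hσs : IsDensity σs) (horth : (ψ * σs).trace = 0)
    (Tw : Matrix n n ℂ →ₗ[ℂ] Matrix n n ℂ) (hTwO : Tw ∈ 𝒪)
    (hTw : ∀ ρ : Matrix n n ℂ, Tw ρ = (ψ * ρ).trace • ψ + ((1 - ψ) * ρ).trace • σs)
    (Rep : Matrix n n ℂ →ₗ[ℂ] Matrix n n ℂ) (hRepO : Rep ∈ 𝒪)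
    (hRep : ∀ ρ : Matrix n n ℂ, Rep ρ = ρ.trace • σs)
    (ρ : Matrix n n ℂ) (hρ : IsDensity ρ)
    (f : ℝ) (hf0 : 0 < f)
    (Λ : Matrix n n ℂ →ₗ[ℂ] Matrix n n ℂ) (hΛO : Λ ∈ 𝒪)
    (hΛopt : ((ψ * Λ ρ).trace).re = f)
    (ε : ℝ) (hε0 : 0 ≤ ε)
    (hC : 1 ≤ 2 * (1 - ε) / f - 1) :
    ∃ Λp ∈ 𝒪, ∃ Λm ∈ 𝒪, ∃ lp lm : ℝ, 0 ≤ lp ∧ 0 ≤ lm ∧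
      lp - lm = 1 ∧ lp + lm = 2 * (1 - ε) / f - 1 ∧
      (1 / 2) * traceNorm ((lp : ℂ) • Λp ρ - (lm : ℂ) • Λm ρ - ψ) ≤ ε := by
  obtain ⟨hρP, hρtr⟩ := hρ
  obtain ⟨hσP, hσtr⟩ := hσs
  subst hψ
  have hψP := posSemidef_vecMulVec_self_star v
  have hψtr : (vecMulVec v (star v)).trace = 1 := by rw [trace_vecMulVec, dotProduct_comm, hv]
  have hσψ : σs * vecMulVec v (star v) = 0 := hσP.mul_vecMulVec_star_eq_zero horth
  have hfid : (vecMulVec v (star v) * Λ ρ).trace = f := by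
    rw [((hcptp Λ hΛO).isHermitian_map hρP.1).trace_vecMulVec_star_mul_eq_re, hΛopt]
  have hTwΛ : Tw (Λ ρ) = (f : ℂ) • vecMulVec v (star v) + (1 - (f : ℂ)) • σs := by
    rw [hTw, sub_mul, one_mul, trace_sub, hfid, (hcptp Λ hΛO).2, hρtr]
  set lp := (1 - ε) / f
  have hlpf : lp * f = 1 - ε := div_mul_cancel₀ _ hf0.ne'
  have hlp : 1 ≤ lp := by
    rw [mul_div_assoc] at hC
    linarith
  refine ⟨Tw ∘ₗ Λ, hcomp Tw hTwO Λ hΛO, Rep, hRepO, lp, lp - 1, by linarith, by linarith,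
    by ring, by rw [mul_div_assoc]; ring, ?_⟩
  have hε : (0 : ℂ) ≤ ε := by exact_mod_cast hε0
  have hdiff : (lp : ℂ) • (Tw ∘ₗ Λ) ρ - ((lp - 1 : ℝ) : ℂ) • Rep ρ - vecMulVec v (star v)
      = (ε : ℂ) • σs - (ε : ℂ) • vecMulVec v (star v) := by
    rw [LinearMap.comp_apply, hTwΛ, hRep, hρtr, one_smul, Complex.ofReal_sub, Complex.ofReal_one]
    exact smul_add_smul_sub_smul_sub_eq (by exact_mod_cast hlpf) _ _
  rw [hdiff, traceNorm_sub_of_mul_eq_zero (hσP.smul hε) (hψP.smul hε)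
    (by rw [smul_mul_smul_comm, hσψ, smul_zero])]
  simp only [trace_smul, hσtr, hψtr, smul_eq_mul, mul_one, Complex.add_re, Complex.ofReal_re]
  linarith

theorem virtual_distillation_achievability
    {n : Type*} [Fintype n] [DecidableEq n]
    (𝒪 : Set (Matrix n n ℂ →ₗ[ℂ] Matrix n n ℂ))
    (hcptp : ∀ Λ ∈ 𝒪, IsCPTP Λ)
    (hcomp : ∀ Λ₁ ∈ 𝒪, ∀ Λ₂ ∈ 𝒪, Λ₁ ∘ₗ Λ₂ ∈ 𝒪)
    (v : n → ℂ) (hv : star v ⬝ᵥ v = 1)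
    (ψ : Matrix n n ℂ) (hψ : ψ = Matrix.vecMulVec v (star v))
    (σs : Matrix n n ℂ) (hσs : IsDensity σs) (horth : (ψ * σs).trace = 0)
    (Tw : Matrix n n ℂ →ₗ[ℂ] Matrix n n ℂ) (hTwO : Tw ∈ 𝒪)
    (hTw : ∀ ρ : Matrix n n ℂ, Tw ρ = (ψ * ρ).trace • ψ + ((1 - ψ) * ρ).trace • σs)
    (Rep : Matrix n n ℂ →ₗ[ℂ] Matrix n n ℂ) (hRepO : Rep ∈ 𝒪)
    (hRep : ∀ ρ : Matrix n n ℂ, Rep ρ = ρ.trace • σs)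
    (ρ : Matrix n n ℂ) (hρ : IsDensity ρ)
    (f : ℝ) (hf0 : 0 < f)
    (Λ : Matrix n n ℂ →ₗ[ℂ] Matrix n n ℂ) (hΛO : Λ ∈ 𝒪)
    (hΛopt : ((ψ * Λ ρ).trace).re = f)
    (hfmax : ∀ Λ' ∈ 𝒪, ((ψ * Λ' ρ).trace).re ≤ f)
    (ε : ℝ) (hε0 : 0 ≤ ε) (hε1 : ε < 1)
    (hC : 1 ≤ 2 * (1 - ε) / f - 1) :
    ∃ Λp ∈ 𝒪, ∃ Λm ∈ 𝒪, ∃ lp lm : ℝ, 0 ≤ lp ∧ 0 ≤ lm ∧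
      lp - lm = 1 ∧ lp + lm = 2 * (1 - ε) / f - 1 ∧
      (1 / 2) * traceNorm ((lp : ℂ) • Λp ρ - (lm : ℂ) • Λm ρ - ψ) ≤ ε :=
  virtual_distillation_achievability_general 𝒪 hcptp hcomp v hv ψ hψ σs hσs horth Tw hTwO hTw Rep
    hRepO hRep ρ hρ f hf0 Λ hΛO hΛopt ε hε0 hC
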